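/- arXiv:1102.2195 — 3 statements merged into one kernel-verified Lean document; each statement's English description precedes it below -/
import Mathlib

section
/- Let p be an element of a join-semilattice L. If A is a tight join-cover of p all of whose elements are join-irreducible, then A is a minimal join-cover of p. -/
/-- A finite set `E` covers `p` if `p ≤ ⋁E`. -/
def Covers {α : Type*} [SemilatticeSup α] (p : α) (E : Finset α) : Prop :=
  ∃ h : E.Nonempty, p ≤ E.sup' h id

/-- `X` refines `E`: every element of `X` lies below some element of `E`. -/
def Refines {α : Type*} [SemilatticeSup α] (X E : Finset α) : Prop :=
  ∀ x ∈ X, ∃ e ∈ E, x ≤ e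

/-- `E` covers `p` tightly: `E` covers `p`, no element of `E` is a least element
of the semilattice, and `p ≰ x ⊔ ⋁(E \ {u})` whenever `u ∈ E` and `x < u`
(the join `x ⊔ ⋁(E \ {u})` being computed as `⋁({x} ∪ (E \ {u}))`). -/
def TightCovers {α : Type*} [SemilatticeSup α] [DecidableEq α]
    (p : α) (E : Finset α) : Prop :=
  Covers p E ∧ (∀ u ∈ E, ¬ IsBot u) ∧
    ∀ u ∈ E, ∀ x, x < u →
      ¬ p ≤ (insert x (E.erase u)).sup' (Finset.insert_nonempty x _) id

/-- `E` joins to `a` tightly: `E` covers `a` tightly and `⋁E = a`. -/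
def TightJoins {α : Type*} [SemilatticeSup α] [DecidableEq α]
    (a : α) (E : Finset α) : Prop :=
  TightCovers a E ∧ ∃ h : E.Nonempty, E.sup' h id = a

/-- `E` covers `p` minimally. -/
def MinCovers {α : Type*} [SemilatticeSup α] (p : α) (E : Finset α) : Prop :=
  Covers p E ∧ ∀ X : Finset α, Covers p X → Refines X E → E ⊆ X

/-!
Let `X` cover `p` and refine `A`, and suppose `u ∈ A` is missing from `X`. The elements of `X`
below `u` are then strictly below `u`, and since `u` is join-irreducible they have a common
upper bound `x < u`. Every other element of `X` lies below some member of `A \ {u}`, so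
`p ≤ ⋁X ≤ x ⊔ ⋁(A \ {u})`, contradicting tightness.
-/

section

variable {α : Type*} [SemilatticeSup α]

theorem SupIrred.exists_lt_forall_le_of_forall_lt {u : α} (hu : SupIrred u) (s : Finset α)
    (hs : ∀ y ∈ s, y < u) : ∃ x < u, ∀ y ∈ s, y ≤ x := by
  induction s using Finset.cons_induction with
  | empty =>
    obtain ⟨x, hx⟩ := not_isMin_iff.1 hu.1
    exact ⟨x, hx, by simp⟩
  | cons y s hy ih =>
    have hyu : y < u := hs y (Finset.mem_cons_self y s)
    obtain ⟨x, hxu, hx⟩ := ih fun z hz => hs z (Finset.mem_cons_of_mem hz)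
    have hsup_lt : y ⊔ x < u := by
      refine (sup_le hyu.le hxu.le).lt_of_ne fun h => ?_
      rcases hu.2 h with h | h
      · exact hyu.ne h
      · exact hxu.ne h
    refine ⟨y ⊔ x, hsup_lt, ?_⟩
    simp only [Finset.mem_cons, forall_eq_or_imp]
    exact ⟨le_sup_left, fun z hz => (hx z hz).trans le_sup_right⟩

theorem Covers.of_refines {p : α} {X E : Finset α} (hX : Covers p X) (hXE : Refines X E) :
    Covers p E := by
  obtain ⟨hXne, hpX⟩ := hX
  obtain ⟨x, hx⟩ := hXne
  obtain ⟨e, he, -⟩ := hXE x hx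
  refine ⟨⟨e, he⟩, hpX.trans (Finset.sup'_le _ _ fun y hy => ?_)⟩
  obtain ⟨e', he', hye'⟩ := hXE y hy
  exact Finset.le_sup'_of_le id he' hye'

theorem Refines.insert_erase [DecidableEq α] {X E : Finset α} (hXE : Refines X E) {u x : α}
    (hx : ∀ y ∈ X, y ≤ u → y ≤ x) : Refines X (insert x (E.erase u)) := by
  intro y hy
  obtain ⟨e, he, hye⟩ := hXE y hy
  by_cases heu : e = u
  · exact ⟨x, Finset.mem_insert_self x _, hx y hy (heu ▸ hye)⟩
  · exact ⟨e, Finset.mem_insert_of_mem (Finset.mem_erase.2 ⟨heu, he⟩), hye⟩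

end

/-- A tight join-cover all of whose elements are join-irreducible is a minimal
join-cover. -/
theorem stmt9 {α : Type*} [SemilatticeSup α] [DecidableEq α] (p : α)
    (A : Finset α) (hA : TightCovers p A) (hirr : ∀ q ∈ A, SupIrred q) :
    MinCovers p A := by
  obtain ⟨hcov, -, htight⟩ := hA
  refine ⟨hcov, fun X hX hXA u hu => ?_⟩
  by_contra huX
  classical
  obtain ⟨x, hxu, hx⟩ := (hirr u hu).exists_lt_forall_le_of_forall_lt (X.filter (· ≤ u))
    fun y hy => (Finset.mem_filter.1 hy).2.lt_of_ne
      fun hyu => huX (hyu ▸ (Finset.mem_filter.1 hy).1)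
  have hrefines : Refines X (insert x (A.erase u)) :=
    hXA.insert_erase fun y hy hyu => hx y (Finset.mem_filter.2 ⟨hy, hyu⟩)
  obtain ⟨_, hp⟩ := hX.of_refines hrefines
  exact htight u hu x hxu hp
end

section
/- Let L be a modular lattice, let p, p̄, a ∈ L with p and p̄ join-irreducible, let Q be a minimal join-cover of a with p̄ ∉ Q, suppose p ≤ p̄ ∨ a is a tight join-cover and that {p̄} ∪ Q covers p irredundantly. Then {p̄} ∪ Q is a minimal join-cover of p. -/
/-- `E` covers `p` irredundantly: `E` covers `p` but no proper subset obtained by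
removing one element does. -/
def IrredCovers {α : Type*} [SemilatticeSup α] [DecidableEq α]
    (p : α) (E : Finset α) : Prop :=
  Covers p E ∧ ∀ u ∈ E, ¬ Covers p (E.erase u)

/-!
Joins of finite sets are taken in `WithBot α`, so that covering is the single inequality
`↑p ≤ ⋁E` also for sets that may be empty. Modularity then enters in three ways. Tightness of
`p ≤ p̄ ⊔ a` upgrades `p ≤ W ⊔ a` to `p̄ ≤ W ⊔ a` and `p ≤ p̄ ⊔ W` to `a ≤ p̄ ⊔ W`. Minimality of
`Q` makes each `q ∈ Q` join-irreducible and gives `q ≤ W` whenever `a ≤ W` and `Q ∖ {q} ≤ W`,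
since replacing `q` by `q ⊓ W` then still gives a cover of `a` refining `Q`. Finally, if a
join-irreducible `z` lies below `⋁X ⊔ t` and every element of `X` is below `z` or below `t`,
then `z ∈ X` or `z ≤ t`.

For a cover `X` of `p` refining `{p̄} ∪ Q` this yields `p̄ ∈ X` or `p̄ ≤ ⋁Q`, and, for `q ∈ Q`,
`q ∈ X` or `q ≤ p̄ ⊔ ⋁(Q ∖ {q})`; the second alternatives contradict irredundancy of `{p̄} ∪ Q`.
-/

namespace WithBot

variable {α : Type*} [Lattice α]

instance [IsModularLattice α] : IsModularLattice (WithBot α) where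
  sup_inf_le_assoc_of_le {x} y {z} h := by
    induction x using WithBot.recBotCoe with
    | bot => simp
    | coe x =>
    induction y using WithBot.recBotCoe with
    | bot => simp
    | coe y =>
    induction z using WithBot.recBotCoe with
    | bot => simp at h
    | coe z =>
    simp only [← coe_sup, ← coe_inf, coe_le_coe] at h ⊢
    exact IsModularLattice.sup_inf_le_assoc_of_le y h

theorem supIrred_coe {a : α} :
    SupIrred (a : WithBot α) ↔ ∀ ⦃b c : α⦄, b ⊔ c = a → b = a ∨ c = a := by
  refine ⟨fun h b c hbc => ?_, fun h => ⟨not_isMin_of_lt (bot_lt_coe a), fun b c hbc => ?_⟩⟩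
  · simpa using @h.2 b c (by rw [← coe_sup, hbc])
  induction b using WithBot.recBotCoe with
  | bot => simp_all
  | coe b =>
  induction c using WithBot.recBotCoe with
  | bot => simp_all
  | coe c => simpa using h (coe_injective (by simpa using hbc))

end WithBot

section ModularLattice

variable {β : Type*} [Lattice β] [IsModularLattice β]

theorem SupIrred.eq_or_le_of_le_sup {z b c : β} (hz : SupIrred z) (hb : b ≤ z)
    (h : z ≤ b ⊔ c) : b = z ∨ z ≤ c := by
  have hmod : b ⊔ c ⊓ z = z := by rw [← sup_inf_assoc_of_le c hb, inf_eq_right.2 h]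
  rcases hz.2 hmod with hbz | hcz
  · exact .inl hbz
  · exact .inr (hcz ▸ inf_le_left)

theorem SupIrred.exists_eq_or_le_of_le_finset_sup [OrderBot β] {ι : Type*} {s : Finset ι}
    {f : ι → β} {z t : β} (hz : SupIrred z) (hs : ∀ i ∈ s, f i ≤ z ∨ f i ≤ t)
    (h : z ≤ s.sup f ⊔ t) : (∃ i ∈ s, f i = z) ∨ z ≤ t := by
  classical
  set s' := s.filter fun i => f i ≤ z
  have hsplit : s.sup f ≤ s'.sup f ⊔ t :=
    Finset.sup_le fun i hi => (hs i hi).elim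
      (fun hiz => le_sup_of_le_left (Finset.le_sup (Finset.mem_filter.2 ⟨hi, hiz⟩)))
      le_sup_of_le_right
  have h' : z ≤ s'.sup f ⊔ t := by
    simpa only [sup_assoc, sup_idem] using h.trans (sup_le_sup_right hsplit t)
  rcases hz.eq_or_le_of_le_sup (Finset.sup_le fun i hi => (Finset.mem_filter.1 hi).2) h'
    with heq | hzt
  · obtain ⟨i, hi, rfl⟩ := hz.finset_sup_eq heq
    exact .inl ⟨i, Finset.mem_of_mem_filter i hi, rfl⟩
  · exact .inr hzt

theorem le_sup_of_le_sup_of_minimal {p x y w : β} (hxy : p ≤ x ⊔ y)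
    (hmin : ∀ x' < x, ¬ p ≤ x' ⊔ y) (hw : p ≤ w ⊔ y) : x ≤ w ⊔ y := by
  have hp : p ≤ x ⊓ (w ⊔ y) ⊔ y := by
    rw [sup_comm, ← sup_inf_assoc_of_le x le_sup_right, sup_comm y]
    exact le_inf hxy hw
  by_contra hx
  exact hmin _ (inf_lt_left.2 hx) hp

end ModularLattice

theorem covers_iff_coe_le_sup {α : Type*} [SemilatticeSup α] {p : α} {E : Finset α} :
    Covers p E ↔ (p : WithBot α) ≤ E.sup WithBot.some := by
  constructor
  · rintro ⟨hE, hp⟩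
    rw [← Function.comp_id WithBot.some, ← Finset.coe_sup' hE]
    exact WithBot.coe_le_coe.2 hp
  · intro hp
    rcases E.eq_empty_or_nonempty with rfl | hE
    · simp at hp
    · refine ⟨hE, WithBot.coe_le_coe.1 ?_⟩
      rwa [Finset.coe_sup' hE, Function.comp_id]

section Lattice

variable {α : Type*} [Lattice α]

theorem coe_le_sup_of_le_sup_of_minimal [IsModularLattice α] {p x y : α} (hxy : p ≤ x ⊔ y)
    (hmin : ∀ x' < x, ¬ p ≤ x' ⊔ y) {W : WithBot α} (hW : (p : WithBot α) ≤ W ⊔ y) :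
    (x : WithBot α) ≤ W ⊔ y := by
  induction W using WithBot.recBotCoe with
  | bot =>
    simpa using le_sup_of_le_sup_of_minimal hxy hmin (w := y) (by simpa using hW)
  | coe w =>
    exact_mod_cast le_sup_of_le_sup_of_minimal hxy hmin (w := w) (by exact_mod_cast hW)

variable [DecidableEq α] {a q : α} {Q : Finset α}

theorem MinCovers.mem_of_covers_sup_erase (hQ : MinCovers a Q) (hq : q ∈ Q) {Y : Finset α}
    (hYq : ∀ y ∈ Y, y ≤ q)
    (hY : (a : WithBot α) ≤ Y.sup WithBot.some ⊔ (Q.erase q).sup WithBot.some) :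
    q ∈ Y := by
  have hcov : Covers a (Y ∪ Q.erase q) := by
    rwa [covers_iff_coe_le_sup, Finset.sup_union]
  have href : Refines (Y ∪ Q.erase q) Q := by
    intro x hx
    rcases Finset.mem_union.1 hx with hxY | hxQ
    · exact ⟨q, hq, hYq x hxY⟩
    · exact ⟨x, Finset.mem_of_mem_erase hxQ, le_rfl⟩
  simpa using hQ.2 _ hcov href hq

theorem MinCovers.supIrred_coe (hQ : MinCovers a Q) (hq : q ∈ Q) :
    SupIrred (q : WithBot α) := by
  refine WithBot.supIrred_coe.2 fun u v huv => ?_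
  have hq' := hQ.mem_of_covers_sup_erase hq (Y := {u, v}) (by simp [← huv]) ?_
  · simp only [Finset.mem_insert, Finset.mem_singleton] at hq'
    exact hq'.imp Eq.symm Eq.symm
  · rw [Finset.sup_insert, Finset.sup_singleton, ← WithBot.coe_sup, huv, ← Finset.sup_insert,
      Finset.insert_erase hq]
    exact covers_iff_coe_le_sup.1 hQ.1

theorem MinCovers.coe_le_of_le [IsModularLattice α] (hQ : MinCovers a Q) (hq : q ∈ Q)
    {W : WithBot α} (haW : (a : WithBot α) ≤ W) (hQW : (Q.erase q).sup WithBot.some ≤ W) :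
    (q : WithBot α) ≤ W := by
  lift W to α using ne_bot_of_le_ne_bot WithBot.coe_ne_bot haW
  have hq' := hQ.mem_of_covers_sup_erase hq (Y := {q ⊓ W}) (by simp) ?_
  · exact WithBot.coe_le_coe.2 (inf_eq_left.1 (Finset.mem_singleton.1 hq').symm)
  · rw [Finset.sup_singleton, WithBot.coe_inf, sup_comm, ← sup_inf_assoc_of_le _ hQW, sup_comm,
      ← Finset.sup_insert, Finset.insert_erase hq]
    exact le_inf (covers_iff_coe_le_sup.1 hQ.1) haW

variable [IsModularLattice α] {p pbar : α} {X : Finset α}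

theorem IrredCovers.mem_of_refines_insert (hirr : IrredCovers p (insert pbar Q))
    (hpbar : SupIrred pbar) (hQ : Covers a Q) (hpbarQ : pbar ∉ Q) (hcov : p ≤ pbar ⊔ a)
    (htight : ∀ x < pbar, ¬ p ≤ x ⊔ a) (hX : Covers p X) (hXE : Refines X (insert pbar Q)) :
    pbar ∈ X := by
  rw [covers_iff_coe_le_sup] at hQ hX
  have hXpbar : ∀ x ∈ X, (x : WithBot α) ≤ pbar ∨ (x : WithBot α) ≤ Q.sup WithBot.some := by
    intro x hx
    obtain ⟨e, he, hxe⟩ := hXE x hx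
    rcases Finset.mem_insert.1 he with rfl | heQ
    · exact .inl (WithBot.coe_le_coe.2 hxe)
    · exact .inr ((WithBot.coe_le_coe.2 hxe).trans (Finset.le_sup heQ))
  have hpbarX : (pbar : WithBot α) ≤ X.sup WithBot.some ⊔ Q.sup WithBot.some :=
    (coe_le_sup_of_le_sup_of_minimal hcov htight (le_sup_of_le_left hX)).trans
      (sup_le_sup_left hQ _)
  rcases (WithBot.supIrred_coe.2 hpbar.2).exists_eq_or_le_of_le_finset_sup hXpbar hpbarX with
    ⟨x, hx, hxpbar⟩ | hpbarQ'
  · exact WithBot.coe_injective hxpbar ▸ hx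
  · refine absurd ?_ (hirr.2 pbar (Finset.mem_insert_self _ _))
    rw [Finset.erase_insert hpbarQ, covers_iff_coe_le_sup]
    calc (p : WithBot α) ≤ (pbar : WithBot α) ⊔ a := by exact_mod_cast hcov
      _ ≤ Q.sup WithBot.some := sup_le hpbarQ' hQ

theorem IrredCovers.subset_of_refines_insert (hirr : IrredCovers p (insert pbar Q))
    (hQ : MinCovers a Q) (hpbarQ : pbar ∉ Q) (hcov : p ≤ pbar ⊔ a)
    (htight : ∀ y < a, ¬ p ≤ pbar ⊔ y) (hX : Covers p X) (hXE : Refines X (insert pbar Q)) :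
    Q ⊆ X := by
  intro q hq
  rw [covers_iff_coe_le_sup] at hX
  set R := (Q.erase q).sup WithBot.some
  have hXq : ∀ x ∈ X, (x : WithBot α) ≤ q ∨ (x : WithBot α) ≤ (pbar : WithBot α) ⊔ R := by
    intro x hx
    obtain ⟨e, he, hxe⟩ := hXE x hx
    rcases Finset.mem_insert.1 he with rfl | heQ
    · exact .inr (le_sup_of_le_left (WithBot.coe_le_coe.2 hxe))
    rcases eq_or_ne e q with rfl | heq
    · exact .inl (WithBot.coe_le_coe.2 hxe)
    · exact .inr (le_sup_of_le_right
        ((WithBot.coe_le_coe.2 hxe).trans (Finset.le_sup (Finset.mem_erase.2 ⟨heq, heQ⟩))))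
  have haX : (a : WithBot α) ≤ X.sup WithBot.some ⊔ (pbar ⊔ R) :=
    (coe_le_sup_of_le_sup_of_minimal (sup_comm pbar a ▸ hcov)
      (by simpa only [sup_comm] using htight) (le_sup_of_le_left hX)).trans
      (sup_le_sup_left le_sup_left _)
  have hqX := hQ.coe_le_of_le hq haX (le_sup_of_le_right le_sup_right)
  rcases (hQ.supIrred_coe hq).exists_eq_or_le_of_le_finset_sup hXq hqX with ⟨x, hx, hxq⟩ | hqR
  · exact WithBot.coe_injective hxq ▸ hx
  · have hqpbar : q ≠ pbar := ne_of_mem_of_not_mem hq hpbarQ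
    refine absurd ?_ (hirr.2 q (Finset.mem_insert_of_mem hq))
    rw [Finset.erase_insert_of_ne hqpbar.symm, covers_iff_coe_le_sup, Finset.sup_insert]
    calc (p : WithBot α) ≤ (pbar : WithBot α) ⊔ a := by exact_mod_cast hcov
      _ ≤ (pbar : WithBot α) ⊔ ((q : WithBot α) ⊔ R) := by
        rw [← Finset.sup_insert, Finset.insert_erase hq]
        exact sup_le_sup_left (covers_iff_coe_le_sup.1 hQ.1) _
      _ ≤ (pbar : WithBot α) ⊔ R := by
        rw [← sup_assoc]
        exact sup_le (sup_le le_sup_left hqR) le_sup_right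

end Lattice

theorem stmt13_general {α : Type*} [Lattice α] [IsModularLattice α] [DecidableEq α]
    (p pbar a : α) (hpbar : SupIrred pbar)
    (Q : Finset α) (hQ : MinCovers a Q) (hpbarQ : pbar ∉ Q)
    (hcov : p ≤ pbar ⊔ a)
    (htight₁ : ∀ x, x < pbar → ¬ p ≤ x ⊔ a)
    (htight₂ : ∀ y, y < a → ¬ p ≤ pbar ⊔ y)
    (hirr : IrredCovers p (insert pbar Q)) :
    MinCovers p (insert pbar Q) :=
  ⟨hirr.1, fun _ hX hXE => Finset.insert_subset
    (hirr.mem_of_refines_insert hpbar hQ.1 hpbarQ hcov htight₁ hX hXE)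
    (hirr.subset_of_refines_insert hQ hpbarQ hcov htight₂ hX hXE)⟩

/-- Lemma on minimal covers in modular lattices: if `p ≤ p̄ ⊔ a` is a tight
join-cover, `Q` is a minimal join-cover of `a` with `p̄ ∉ Q`, and `{p̄} ∪ Q` covers
`p` irredundantly, then `{p̄} ∪ Q` is a minimal join-cover of `p`. -/
theorem stmt13 {α : Type*} [Lattice α] [IsModularLattice α] [DecidableEq α]
    (p pbar a : α) (hp : SupIrred p) (hpbar : SupIrred pbar)
    (Q : Finset α) (hQ : MinCovers a Q) (hpbarQ : pbar ∉ Q)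
    (hcov : p ≤ pbar ⊔ a)
    (htight₁ : ∀ x, x < pbar → ¬ p ≤ x ⊔ a)
    (htight₂ : ∀ y, y < a → ¬ p ≤ pbar ⊔ y)
    (hirr : IrredCovers p (insert pbar Q)) :
    MinCovers p (insert pbar Q) :=
  stmt13_general p pbar a hpbar Q hQ hpbarQ hcov htight₁ htight₂ hirr
end

section
/- Every modular spatial lattice is strongly spatial: if p is a completely join-irreducible element of a modular spatial lattice L and X is a finite join-cover of p, then X can be refined to a minimal join-cover of p consisting of completely join-irreducible elements. -/
/-- `p` is completely join-irreducible (a point): the set of elements strictly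
below `p` has a largest element. -/
def CJI {α : Type*} [Lattice α] (p : α) : Prop :=
  ∃ q, q < p ∧ ∀ x, x < p → x ≤ q

/-- A lattice is spatial if every element is the (possibly infinite) join of the
points below it. -/
def Spatial (α : Type*) [Lattice α] : Prop :=
  ∀ a : α, IsLUB {p | CJI p ∧ p ≤ a} a

section

variable {α : Type*}

namespace Refines

variable [SemilatticeSup α]

theorem refl (E : Finset α) : Refines E E :=
  fun x hx => ⟨x, hx, le_rfl⟩

theorem of_subset {X E : Finset α} (h : X ⊆ E) : Refines X E :=
  fun x hx => ⟨x, h hx, le_rfl⟩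

theorem trans {X Y Z : Finset α} (hXY : Refines X Y) (hYZ : Refines Y Z) : Refines X Z := by
  intro x hx
  obtain ⟨y, hy, hxy⟩ := hXY x hx
  obtain ⟨z, hz, hyz⟩ := hYZ y hy
  exact ⟨z, hz, hxy.trans hyz⟩

end Refines

namespace Covers

variable [SemilatticeSup α] {p : α}

theorem of_refines_s15 {Z E : Finset α} (hZ : Covers p Z) (hr : Refines Z E) : Covers p E := by
  obtain ⟨hZne, hpZ⟩ := hZ
  obtain ⟨z, hz⟩ := hZne
  obtain ⟨e, he, -⟩ := hr z hz
  refine ⟨⟨e, he⟩, hpZ.trans (Finset.sup'_le _ _ fun z hz => ?_)⟩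
  obtain ⟨e, he, hze⟩ := hr z hz
  exact hze.trans (Finset.le_sup' id he)

theorem mono {Z E : Finset α} (hZ : Covers p Z) (h : Z ⊆ E) : Covers p E :=
  hZ.of_refines_s15 (Refines.of_subset h)

end Covers

section CoversIff

variable [SemilatticeSup α] {p : α}

theorem covers_singleton_iff {x : α} : Covers p {x} ↔ p ≤ x := by
  simp [Covers]

theorem covers_iff_le_sup' {S : Finset α} (hS : S.Nonempty) :
    Covers p S ↔ p ≤ S.sup' hS id :=
  ⟨fun ⟨_, h⟩ => h, fun h => ⟨hS, h⟩⟩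

theorem covers_insert_iff [DecidableEq α] {x : α} {S : Finset α} (hS : S.Nonempty) :
    Covers p (insert x S) ↔ p ≤ x ⊔ S.sup' hS id := by
  rw [covers_iff_le_sup' (Finset.insert_nonempty x S), Finset.sup'_insert, id]

end CoversIff

section Modular

variable [Lattice α] [IsModularLattice α] {p b : α}

/-- Modularity gives `p = x ⊔ (b ⊓ p)`, and both joinands lie below the predecessor of `p`. -/
theorem CJI.not_le_sup_of_lt (hp : CJI p) (hpb : ¬ p ≤ b) {x : α} (hx : x < p) :
    ¬ p ≤ x ⊔ b := by
  obtain ⟨p', hp'p, hp'⟩ := hp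
  intro hpxb
  have hbp : b ⊓ p ≤ p' := hp' _ (inf_le_right.lt_of_ne fun h => hpb (h ▸ inf_le_left))
  have : p ≤ x ⊔ b ⊓ p := by
    rw [← sup_inf_assoc_of_le b hx.le]
    exact le_inf hpxb le_rfl
  exact hp'p.not_ge (this.trans (sup_le (hp' x hx) hbp))

theorem CJI.not_le_sup_of_sup_eq {q : α} (hq : CJI q) (hqb : q ⊔ b = p ⊔ b) (hpb : ¬ p ≤ b)
    {x : α} (hx : x < q) : ¬ p ≤ x ⊔ b := by
  intro hpxb
  have hqnb : ¬ q ≤ b := fun h => hpb (le_sup_left.trans (hqb ▸ sup_le h le_rfl))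
  exact hq.not_le_sup_of_lt hqnb hx
    (le_sup_left.trans (hqb.trans_le (sup_le hpxb le_sup_right)))

/-- The point `q` is any point below `a ⊓ (p ⊔ b)` but not below `p' ⊔ b`, where `p'` is the
predecessor of `p`; spatiality provides one because `a ⊓ (p ⊔ b) ⊔ b = p ⊔ b`. -/
theorem exists_cji_le_sup_eq (hsp : Spatial α) (hp : CJI p) {a : α} (hpab : p ≤ a ⊔ b)
    (hpb : ¬ p ≤ b) : ∃ q, CJI q ∧ q ≤ a ∧ q ⊔ b = p ⊔ b := by
  have ⟨p', hp'p, hp'⟩ := hp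
  have hpp'b : ¬ p ≤ p' ⊔ b := hp.not_le_sup_of_lt hpb hp'p
  have ha'b : a ⊓ (p ⊔ b) ⊔ b = p ⊔ b := by
    rw [inf_comm, inf_sup_assoc_of_le _ le_sup_right]
    exact inf_eq_left.2 (sup_le hpab le_sup_right)
  obtain ⟨q, ⟨hq, hqa'⟩, hqp'b⟩ : ∃ q, (CJI q ∧ q ≤ a ⊓ (p ⊔ b)) ∧ ¬ q ≤ p' ⊔ b := by
    by_contra! h
    have ha' : a ⊓ (p ⊔ b) ≤ p' ⊔ b := (hsp _).2 h
    exact hpp'b (le_sup_left.trans (ha'b ▸ sup_le ha' le_sup_right))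
  have hqb : q ⊔ b ≤ p ⊔ b := sup_le (hqa'.trans inf_le_right) le_sup_right
  have hpqb : p ≤ q ⊔ b := by
    by_contra hpqb
    have hinf : p ⊓ (q ⊔ b) ≤ p' :=
      hp' _ (inf_le_left.lt_of_ne fun h => hpqb (h ▸ inf_le_right))
    have : q ⊔ b ≤ p' ⊔ b := by
      rw [← inf_eq_right.2 hqb, sup_comm p, sup_inf_assoc_of_le p le_sup_right, sup_comm]
      exact sup_le_sup_right hinf b
    exact hqp'b (le_sup_left.trans this)
  exact ⟨q, hq, hqa'.trans inf_le_left, le_antisymm hqb (sup_le hpqb le_sup_right)⟩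

theorem exists_cji_covers_insert (hsp : Spatial α) (hp : CJI p) [DecidableEq α] {a : α}
    {S : Finset α} (hcov : Covers p (insert a S)) (hS : ¬ Covers p S) :
    ∃ q, CJI q ∧ q ≤ a ∧ Covers p (insert q S) ∧ ∀ x < q, ¬ Covers p (insert x S) := by
  rcases S.eq_empty_or_nonempty with rfl | hSne
  · simp only [insert_empty_eq, covers_singleton_iff] at hcov ⊢
    exact ⟨p, hp, hcov, le_rfl, fun x hx hpx => hx.not_ge hpx⟩
  · simp only [covers_insert_iff hSne] at hcov ⊢
    rw [covers_iff_le_sup' hSne] at hS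
    obtain ⟨q, hq, hqa, hqb⟩ := exists_cji_le_sup_eq hsp hp hcov hS
    exact ⟨q, hq, hqa, le_sup_left.trans hqb.ge, fun x => hq.not_le_sup_of_sup_eq hqb hS⟩

end Modular

section Tight

variable [Lattice α] [DecidableEq α] {p a : α} {E E' : Finset α}

def IsTight (p : α) (E : Finset α) (a : α) : Prop :=
  CJI a ∧ ∀ x < a, ¬ Covers p (insert x (E.erase a))

open Classical in
noncomputable def nonTight (p : α) (E : Finset α) : Finset α :=
  E.filter fun a => ¬ IsTight p E a

theorem mem_nonTight : a ∈ nonTight p E ↔ a ∈ E ∧ ¬ IsTight p E a := by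
  simp [nonTight]

theorem IsTight.of_refines_s15 {e : α} (he : IsTight p E e) (hr : Refines (E'.erase e) (E.erase e)) :
    IsTight p E' e := by
  refine ⟨he.1, fun x hx hcov => he.2 x hx (hcov.of_refines_s15 ?_)⟩
  intro z hz
  rcases Finset.mem_insert.1 hz with rfl | hz
  · exact ⟨z, Finset.mem_insert_self _ _, le_rfl⟩
  · obtain ⟨w, hw, hzw⟩ := hr z hz
    exact ⟨w, Finset.mem_insert_of_mem hw, hzw⟩

/-- A cover `Z` refining `E` but missing `a ∈ E` refines `E` with `a` lowered to its
predecessor. -/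
theorem minCovers_of_forall_isTight (hE : Covers p E) (htight : ∀ a ∈ E, IsTight p E a) :
    MinCovers p E := by
  refine ⟨hE, fun Z hZ hr a haE => ?_⟩
  by_contra haZ
  obtain ⟨⟨a', ha'a, ha'⟩, hlow⟩ := htight a haE
  refine hlow a' ha'a (hZ.of_refines_s15 fun z hz => ?_)
  obtain ⟨e, he, hze⟩ := hr z hz
  by_cases hea : e = a
  · subst hea
    exact ⟨a', Finset.mem_insert_self _ _,
      ha' z (hze.lt_of_ne fun h => haZ (h ▸ hz))⟩
  · exact ⟨e, Finset.mem_insert_of_mem (Finset.mem_erase.2 ⟨hea, he⟩), hze⟩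

theorem refines_of_subset_insert_erase {q : α} (ha : a ∈ E) (hqa : q ≤ a)
    (hE' : E' ⊆ insert q (E.erase a)) : Refines E' E := by
  intro z hz
  rcases Finset.mem_insert.1 (hE' hz) with rfl | hz
  · exact ⟨a, ha, hqa⟩
  · exact ⟨z, Finset.mem_of_mem_erase hz, le_rfl⟩

/-- Dropping `a` from `E` is the case `q = a`. -/
theorem nonTight_subset_erase {q : α} (ha : a ∈ E) (hqa : q ≤ a)
    (hE' : E' ⊆ insert q (E.erase a)) (hq : q ∈ E' → IsTight p E' q) :
    nonTight p E' ⊆ (nonTight p E).erase a := by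
  intro e he
  obtain ⟨heE', hnt⟩ := mem_nonTight.1 he
  have heq : e ≠ q := by
    rintro rfl
    exact hnt (hq heE')
  have heEa : e ∈ E.erase a := (Finset.mem_insert.1 (hE' heE')).resolve_left heq
  have hea : e ≠ a := Finset.ne_of_mem_erase heEa
  refine Finset.mem_erase.2 ⟨hea, mem_nonTight.2 ⟨Finset.mem_of_mem_erase heEa, fun ht => ?_⟩⟩
  refine hnt (ht.of_refines_s15 fun z hz => ?_)
  obtain ⟨hze, hzE'⟩ := Finset.mem_erase.1 hz
  rcases Finset.mem_insert.1 (hE' hzE') with rfl | hz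
  · exact ⟨a, Finset.mem_erase.2 ⟨hea.symm, ha⟩, hqa⟩
  · exact ⟨z, Finset.mem_erase.2 ⟨hze, Finset.mem_of_mem_erase hz⟩, le_rfl⟩

theorem exists_covers_refines_nonTight_ssubset [IsModularLattice α] (hsp : Spatial α)
    (hp : CJI p) (hE : Covers p E) (ha : a ∈ nonTight p E) :
    ∃ E', Covers p E' ∧ Refines E' E ∧ nonTight p E' ⊂ nonTight p E := by
  have haE : a ∈ E := (mem_nonTight.1 ha).1
  have hlower : ∀ q ≤ a, ∀ E' ⊆ insert q (E.erase a), (q ∈ E' → IsTight p E' q) →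
      Refines E' E ∧ nonTight p E' ⊂ nonTight p E := fun q hqa E' hE' hq =>
    ⟨refines_of_subset_insert_erase haE hqa hE',
      (nonTight_subset_erase haE hqa hE' hq).trans_ssubset (Finset.erase_ssubset ha)⟩
  by_cases hS : Covers p (E.erase a)
  · exact ⟨E.erase a, hS, hlower a le_rfl _ (Finset.subset_insert _ _)
      fun h => absurd h (Finset.notMem_erase a E)⟩
  · obtain ⟨q, hq, hqa, hcov, hmin⟩ :=
      exists_cji_covers_insert hsp hp (by rwa [Finset.insert_erase haE]) hS
    refine ⟨insert q (E.erase a), hcov, hlower q hqa _ subset_rfl fun _ => ⟨hq, fun x hx h => ?_⟩⟩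
    exact hmin x hx (h.mono (Finset.insert_subset_insert x (Finset.erase_insert_subset q _)))

theorem exists_minCovers_cji_refines [IsModularLattice α] (hsp : Spatial α) (hp : CJI p)
    (E : Finset α) (hE : Covers p E) :
    ∃ Y : Finset α, MinCovers p Y ∧ Refines Y E ∧ ∀ q ∈ Y, CJI q := by
  by_cases htight : ∀ a ∈ E, IsTight p E a
  · exact ⟨E, minCovers_of_forall_isTight hE htight, Refines.refl E, fun q hq => (htight q hq).1⟩
  obtain ⟨a, haE, ha⟩ := not_forall₂.1 htight
  obtain ⟨E', hE', hE'E, hlt⟩ :=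
    exists_covers_refines_nonTight_ssubset hsp hp hE (mem_nonTight.2 ⟨haE, ha⟩)
  obtain ⟨Y, hY, hYE', hYpts⟩ := exists_minCovers_cji_refines hsp hp E' hE'
  exact ⟨Y, hY, hYE'.trans hE'E, hYpts⟩
termination_by (nonTight p E).card
decreasing_by exact Finset.card_lt_card hlt

end Tight

end

/-- Every modular spatial lattice is strongly spatial: every finite join-cover of a
point `p` refines to a minimal join-cover of `p` consisting of points. -/
theorem stmt15 {α : Type*} [Lattice α] [IsModularLattice α] (hsp : Spatial α)
    (p : α) (hp : CJI p) (X : Finset α) (hX : Covers p X) :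
    ∃ Y : Finset α, MinCovers p Y ∧ Refines Y X ∧ ∀ q ∈ Y, CJI q := by
  classical
  exact exists_minCovers_cji_refines hsp hp X hX
end
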